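/- The canonical RFA of a regular language L accepts exactly L. -/

import Mathlib

def res {α : Type*} (L : Set (List α)) (u : List α) : Set (List α) := {v | u ++ v ∈ L}

def Res {α : Type*} (L : Set (List α)) : Set (Set (List α)) := {L' | ∃ u, L' = res L u}

/-- A language is prime in a class `𝕃` if it belongs to `𝕃` and is not the union of the
languages of `𝕃` strictly contained in it. -/
def IsPrimeIn {α : Type*} (𝕃 : Set (Set (List α))) (L : Set (List α)) : Prop :=
  L ∈ 𝕃 ∧ L ≠ ⋃₀ {L' | L' ∈ 𝕃 ∧ L' ⊂ L}

def IsRegularLang {α : Type*} (L : Set (List α)) : Prop :=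
  ∃ (σ : Type) (_ : Fintype σ) (M : DFA α σ), ∀ w, w ∈ M.accepts ↔ w ∈ L

/-- The canonical RFA of a language `L`: states are the prime residual languages of `L`. -/
def canonicalRFA {α : Type*} (L : Set (List α)) :
    NFA α {L' : Set (List α) // IsPrimeIn (Res L) L'} where
  step q a := {q' | q'.1 ⊆ res q.1 [a]}
  start := {q | q.1 ⊆ L}
  accept := {q | [] ∈ q.1}

/-- The language accepted from a single state `q` of an NFA. -/
def lq {α σ : Type*} (M : NFA α σ) (q : σ) : Set (List α) :=
  {w | (M.evalFrom {q} w ∩ M.accept).Nonempty}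

/-!
Since `L` is regular it has finitely many residuals, so `⊂` is well founded on `Res L` and every
residual is the union of the prime residuals it contains (a non-prime one is the union of strictly
smaller residuals). By induction on `w`, the state `P` of the canonical RFA then accepts exactly
`P`: `a :: w` is accepted from `P` iff `w` lies in some prime residual contained in `a⁻¹P`, i.e. iff
`w ∈ a⁻¹P`. The initial states are the prime residuals contained in `L`, whose union is `L`.
-/

namespace NFA

variable {α σ : Type*} (M : NFA α σ)

theorem mem_acceptsFrom_iff_exists_singleton {S : Set σ} {w : List α} :
    w ∈ M.acceptsFrom S ↔ ∃ q ∈ S, w ∈ M.acceptsFrom {q} := by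
  simp only [mem_acceptsFrom, mem_evalFrom_iff_exists (S := S)]
  grind

theorem mem_lq_iff_mem_acceptsFrom {q : σ} {w : List α} : w ∈ lq M q ↔ w ∈ M.acceptsFrom {q} :=
  exists_congr fun _ => and_comm

theorem nil_mem_lq {q : σ} : [] ∈ lq M q ↔ q ∈ M.accept := by
  simp [mem_lq_iff_mem_acceptsFrom]

theorem cons_mem_lq {q : σ} {a : α} {w : List α} :
    a :: w ∈ lq M q ↔ ∃ q' ∈ M.step q a, w ∈ lq M q' := by
  simp only [mem_lq_iff_mem_acceptsFrom, cons_mem_acceptsFrom, stepSet_singleton]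
  exact M.mem_acceptsFrom_iff_exists_singleton

theorem mem_accepts_iff_exists_lq {w : List α} : w ∈ M.accepts ↔ ∃ q ∈ M.start, w ∈ lq M q := by
  simp only [mem_lq_iff_mem_acceptsFrom, accepts_eq_acceptsFrom_start]
  exact M.mem_acceptsFrom_iff_exists_singleton

end NFA

section Residuals

variable {α : Type*}

theorem res_append (L : Set (List α)) (u v : List α) : res L (u ++ v) = res (res L u) v := by
  ext w
  simp [res, List.append_assoc]

theorem mem_Res_self (L : Set (List α)) : L ∈ Res L := ⟨[], rfl⟩

theorem res_mem_Res {L L' : Set (List α)} (h : L' ∈ Res L) (v : List α) : res L' v ∈ Res L := by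
  obtain ⟨u, rfl⟩ := h
  exact ⟨u ++ v, (res_append L u v).symm⟩

theorem IsRegularLang.finite_Res {L : Set (List α)} (hL : IsRegularLang L) : (Res L).Finite := by
  obtain ⟨σ, _, M, hM⟩ := hL
  refine (Set.finite_range fun s : σ => {v | M.evalFrom s v ∈ M.accept}).subset ?_
  rintro _ ⟨u, rfl⟩
  refine ⟨M.eval u, Set.ext fun v => ?_⟩
  simp only [res, Set.mem_ofPred_eq, ← hM, DFA.mem_accepts, DFA.eval, DFA.evalFrom_of_append]

end Residuals

theorem exists_isPrimeIn_subset_mem_iff {α : Type*} {𝕃 : Set (Set (List α))} (h𝕃 : 𝕃.Finite)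
    {L : Set (List α)} (hL : L ∈ 𝕃) {v : List α} :
    (∃ P ⊆ L, IsPrimeIn 𝕃 P ∧ v ∈ P) ↔ v ∈ L := by
  refine ⟨fun ⟨_, hPL, _, hvP⟩ => hPL hvP, ?_⟩
  refine (h𝕃.wellFoundedOn (r := (· ⊂ ·))).induction hL
    (P := fun L => v ∈ L → ∃ P ⊆ L, IsPrimeIn 𝕃 P ∧ v ∈ P) ?_
  intro L hL ih hv
  by_cases hprime : IsPrimeIn 𝕃 L
  · exact ⟨L, subset_rfl, hprime, hv⟩
  · have hL_eq : L = ⋃₀ {L' | L' ∈ 𝕃 ∧ L' ⊂ L} := not_not.mp (not_and.mp hprime hL)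
    obtain ⟨L', ⟨hL', hL'L⟩, hvL'⟩ := hL_eq ▸ hv
    obtain ⟨P, hPL', hP⟩ := ih L' hL' hL'L hvL'
    exact ⟨P, hPL'.trans hL'L.subset, hP⟩

theorem lq_canonicalRFA {α : Type*} {L : Set (List α)} (hL : (Res L).Finite)
    (q : {L' // IsPrimeIn (Res L) L'}) : lq (canonicalRFA L) q = q.1 := by
  ext w
  induction w generalizing q with
  | nil => exact NFA.nil_mem_lq _
  | cons a w ih =>
    simp only [NFA.cons_mem_lq, ih]
    simpa [canonicalRFA, res] using exists_isPrimeIn_subset_mem_iff hL (res_mem_Res q.2.1 [a]) (v := w)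

theorem canonicalRFA_accepts {α : Type*} (L : Set (List α)) (hreg : IsRegularLang L) :
    ∀ w, w ∈ (canonicalRFA L).accepts ↔ w ∈ L := by
  intro w
  simp only [NFA.mem_accepts_iff_exists_lq, lq_canonicalRFA hreg.finite_Res]
  simpa [canonicalRFA] using
    exists_isPrimeIn_subset_mem_iff hreg.finite_Res (mem_Res_self L) (v := w)
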